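/- For any hypergraph H, any α ∈ [0,1], and any distinct vertices x, y, the (α,h)-Ollivier–Ricci curvature satisfies κ̃(α,h;x,y) ≥ −2h'(0)(1−α) / W_h(δ_x, δ_y). -/

import Mathlib

open Filter Set Classical

noncomputable section

/-- A hypergraph: a vertex type together with a family of hyperedges. -/
structure HGraph (V : Type*) where
  E : Set (Set V)

namespace HGraph

variable {V : Type*}

/-- Two distinct vertices are adjacent if some hyperedge contains both. -/
def Adj (H : HGraph V) (x y : V) : Prop :=
  x ≠ y ∧ ∃ e ∈ H.E, x ∈ e ∧ y ∈ e

/-- There is a path of length `n` from `x` to `y` (each consecutive pair lies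
in a common hyperedge). -/
def IsPath (H : HGraph V) (x y : V) (n : ℕ) : Prop :=
  ∃ f : ℕ → V, f 0 = x ∧ f n = y ∧ ∀ i < n, ∃ e ∈ H.E, f i ∈ e ∧ f (i + 1) ∈ e

/-- The graph distance on a hypergraph: the shortest length of a path. -/
def dist (H : HGraph V) (x y : V) : ℕ :=
  sInf {n | H.IsPath x y n}

def Connected (H : HGraph V) : Prop := ∀ x y : V, ∃ n, H.IsPath x y n

def LocallyFinite (H : HGraph V) : Prop := ∀ x : V, {y | H.Adj x y}.Finite

/-- A hypergraph is simple if no hyperedge is contained in a different one. -/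
def Simple (H : HGraph V) : Prop :=
  ∀ e₁ ∈ H.E, ∀ e₂ ∈ H.E, e₁ ≠ e₂ → ¬e₁ ⊆ e₂

/-- The degree of a vertex: the number of its neighbours. -/
def degree (H : HGraph V) (x : V) : ℕ := {y | H.Adj x y}.ncard

end HGraph

/-- A finitely supported probability function on `V`. -/
def IsProb {V : Type*} (μ : V → ℝ) : Prop :=
  (∀ v, 0 ≤ μ v) ∧ (Function.support μ).Finite ∧ ∑' v, μ v = 1

/-- A coupling of two probability functions. -/
def IsCoupling {V : Type*} (π : V → V → ℝ) (μ ν : V → ℝ) : Prop :=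
  (∀ x y, 0 ≤ π x y) ∧ (∀ x, ∑' y, π x y = μ x) ∧ (∀ y, ∑' x, π x y = ν y)

/-- The L¹-Wasserstein distance with respect to the graph distance of `H`. -/
def W1 {V : Type*} (H : HGraph V) (μ ν : V → ℝ) : ℝ :=
  sInf {c | ∃ π, IsCoupling π μ ν ∧
    c = ∑' p : V × V, (H.dist p.1 p.2 : ℝ) * π p.1 p.2}

/-- A sequence of probability measures from `μ` to `ν` each of whose increments
is supported in a single hyperedge. -/
def WhAdmissible {V : Type*} (H : HGraph V) (μ ν : V → ℝ) (I : ℕ)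
    (ξ : ℕ → V → ℝ) : Prop :=
  ξ 0 = μ ∧ ξ I = ν ∧ (∀ i ≤ I, IsProb (ξ i)) ∧
    ∀ i < I, ∃ e ∈ H.E, Function.support (fun v => ξ (i + 1) v - ξ i v) ⊆ e

/-- The new transport distance `W_h`. -/
def Wh {V : Type*} (H : HGraph V) (h : ℝ → ℝ) (μ ν : V → ℝ) : ℝ :=
  sInf {c | ∃ I ξ, WhAdmissible H μ ν I ξ ∧
    c = ∑ i ∈ Finset.range I, h (W1 H (ξ i) (ξ (i + 1)))}

/-- Assumptions on the concave cost function `h`, with one-sided derivatives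
`D0 = h'(0)` and `D1 = h'(1)`. -/
structure CostFn (h : ℝ → ℝ) (D0 D1 : ℝ) : Prop where
  nonneg : ∀ x ∈ Set.Icc (0 : ℝ) 1, 0 ≤ h x
  mono : MonotoneOn h (Set.Icc (0 : ℝ) 1)
  cont : ContinuousOn h (Set.Icc (0 : ℝ) 1)
  concave : ConcaveOn ℝ (Set.Icc (0 : ℝ) 1) h
  zero : h 0 = 0
  d0_pos : 0 < D0
  d0 : Filter.Tendsto (fun t => h t / t) (nhdsWithin 0 (Set.Ioi 0)) (nhds D0)
  d1 : Filter.Tendsto (fun t => (h 1 - h t) / (1 - t))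
    (nhdsWithin 1 (Set.Iio 1)) (nhds D1)

/-- The Dirac measure at a point, as a probability function. -/
def dirac {V : Type*} (x : V) : V → ℝ := fun v => if v = x then 1 else 0

/-- The `α`-lazy uniform random walk at `x`. -/
def rw {V : Type*} (H : HGraph V) (α : ℝ) (x : V) : V → ℝ :=
  fun v => if v = x then α else if H.Adj x v then (1 - α) / (H.degree x) else 0

/-- The `(α,h)`-Ollivier–Ricci curvature. -/
def ORic {V : Type*} (H : HGraph V) (h : ℝ → ℝ) (α : ℝ) (x y : V) : ℝ :=
  1 - Wh H h (rw H α x) (rw H α y) / Wh H h (dirac x) (dirac y)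

/-- The `h`-LLY–Ricci curvature. -/
def hLLY {V : Type*} (H : HGraph V) (h : ℝ → ℝ) (x y : V) : ℝ :=
  Filter.liminf (fun α => ORic H h α x y / (1 - α)) (nhdsWithin 1 (Set.Iio 1))

end

/-!
Admissible transport sequences can be concatenated and reversed, so
`W_h(m_x, m_y) ≤ W_h(m_x, δ_x) + W_h(δ_x, δ_y) + W_h(δ_y, m_y)`. The walk `m_x` is reached from
`δ_x` by moving mass `(1 - α) / d_x` from `x` to one neighbour at a time. Each move takes place
inside a hyperedge, so its `W_1`-cost is at most the mass moved (maximal coupling, all distances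
`≤ 1`), and concavity gives `h(t) ≤ h'(0) t`; hence `W_h(δ_x, m_x) ≤ h'(0)(1 - α)`, and dividing
by `W_h(δ_x, δ_y)` gives the bound. The same `W_1 ≤ 1` bound keeps every step cost in `[0, 1]`,
where `h ≥ 0`, so the infima defining `W_h` are over sets bounded below.
-/

namespace HGraph

variable {V : Type*} (H : HGraph V)

theorem dist_self (x : V) : H.dist x x = 0 :=
  Nat.sInf_eq_zero.mpr (Or.inl ⟨fun _ => x, rfl, rfl, by omega⟩)

theorem dist_le_one {x y : V} {e : Set V} (he : e ∈ H.E) (hx : x ∈ e) (hy : y ∈ e) :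
    H.dist x y ≤ 1 :=
  Nat.sInf_le ⟨fun n => if n = 0 then x else y, rfl, rfl, fun i hi => by
    obtain rfl : i = 0 := by omega
    exact ⟨e, he, hx, hy⟩⟩

theorem IsPath.symm {H : HGraph V} {x y : V} {n : ℕ} (hp : H.IsPath x y n) :
    H.IsPath y x n := by
  obtain ⟨f, h0, hn, hstep⟩ := hp
  refine ⟨fun i => f (n - i), by simp [hn], by simp [h0], fun i hi => ?_⟩
  obtain ⟨e, he, h1, h2⟩ := hstep (n - (i + 1)) (by omega)
  have hi' : n - (i + 1) + 1 = n - i := by omega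
  refine ⟨e, he, ?_, h1⟩
  show f (n - i) ∈ e
  rwa [← hi']

theorem dist_comm (x y : V) : H.dist x y = H.dist y x := by
  simp only [HGraph.dist]
  congr 1
  ext n
  exact ⟨IsPath.symm, IsPath.symm⟩

theorem degree_pos (hconn : H.Connected) (hlf : H.LocallyFinite) {x y : V} (hxy : x ≠ y) :
    0 < H.degree x := by
  obtain ⟨n, f, h0, hn, hstep⟩ := hconn x y
  by_contra hdeg
  have hnone : ∀ z, ¬H.Adj x z := fun z hz =>
    hdeg ((Set.ncard_pos (hlf x)).mpr ⟨z, hz⟩)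
  have hconst : ∀ i ≤ n, f i = x := by
    intro i hi
    induction i with
    | zero => exact h0
    | succ k ih =>
      obtain ⟨e, he, hk, hk1⟩ := hstep k (by omega)
      by_contra hne
      exact hnone _ ⟨Ne.symm hne, e, he, ih (by omega) ▸ hk, hk1⟩
  exact hxy ((hconst n le_rfl).symm.trans hn)

end HGraph

section Wasserstein

variable {V : Type*} (H : HGraph V)

theorem isProb_dirac (x : V) : IsProb (dirac x) := by
  refine ⟨fun v => by unfold dirac; split_ifs <;> norm_num, ?_, ?_⟩
  · refine (Set.finite_singleton x).subset fun v hv => ?_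
    by_contra hvx
    exact hv (if_neg hvx)
  · simp [dirac]

theorem W1_le_of_isCoupling {μ ν : V → ℝ} {π : V → V → ℝ} (hπ : IsCoupling π μ ν) :
    W1 H μ ν ≤ ∑' p : V × V, (H.dist p.1 p.2 : ℝ) * π p.1 p.2 := by
  refine csInf_le ⟨0, ?_⟩ ⟨π, hπ, rfl⟩
  rintro _ ⟨π', hπ', rfl⟩
  exact tsum_nonneg fun p => mul_nonneg (Nat.cast_nonneg _) (hπ'.1 _ _)

theorem W1_nonneg (μ ν : V → ℝ) : 0 ≤ W1 H μ ν := by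
  refine Real.sInf_nonneg ?_
  rintro _ ⟨π, hπ, rfl⟩
  exact tsum_nonneg fun p => mul_nonneg (Nat.cast_nonneg _) (hπ.1 _ _)

theorem W1_comm (μ ν : V → ℝ) : W1 H μ ν = W1 H ν μ := by
  have hcost : ∀ π : V → V → ℝ, ∑' p : V × V, (H.dist p.1 p.2 : ℝ) * π p.2 p.1
      = ∑' p : V × V, (H.dist p.1 p.2 : ℝ) * π p.1 p.2 := fun π =>
    (tsum_congr fun p => by rw [H.dist_comm]; rfl).trans
      ((Equiv.prodComm V V).tsum_eq fun p => (H.dist p.1 p.2 : ℝ) * π p.1 p.2)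
  have htranspose : ∀ {μ ν : V → ℝ} {π : V → V → ℝ}, IsCoupling π μ ν →
      IsCoupling (fun u v => π v u) ν μ := fun ⟨hπ0, hrow, hcol⟩ =>
    ⟨fun u v => hπ0 v u, hcol, hrow⟩
  unfold W1
  congr 1
  ext c
  constructor
  · rintro ⟨π, hπ, rfl⟩
    exact ⟨_, htranspose hπ, (hcost π).symm⟩
  · rintro ⟨π, hπ, rfl⟩
    exact ⟨_, htranspose hπ, (hcost π).symm⟩

def excess (μ ν : V → ℝ) (v : V) : ℝ := max (μ v - ν v) 0

theorem excess_nonneg (μ ν : V → ℝ) : 0 ≤ excess μ ν := fun _ => le_max_right _ _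

theorem min_add_excess (μ ν : V → ℝ) (v : V) : min (μ v) (ν v) + excess μ ν v = μ v := by
  rcases le_total (μ v) (ν v) with h | h <;> simp [excess, h]

theorem summable_excess {μ ν : V → ℝ} (hμ : IsProb μ) (hν0 : ∀ v, 0 ≤ ν v) :
    Summable (excess μ ν) :=
  (summable_of_hasFiniteSupport hμ.2.1).of_nonneg_of_le (excess_nonneg μ ν)
    fun v => max_le (by linarith [hν0 v]) (hμ.1 v)

theorem tsum_excess_comm {μ ν : V → ℝ} (hμ : IsProb μ) (hν : IsProb ν) :
    ∑' v, excess ν μ v = ∑' v, excess μ ν v := by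
  have hdiff : ∑' v, (excess μ ν v - excess ν μ v) = 0 := by
    rw [tsum_congr fun v => show excess μ ν v - excess ν μ v = μ v - ν v by
        linarith [min_add_excess μ ν v, min_add_excess ν μ v, min_comm (μ v) (ν v)],
      (summable_of_hasFiniteSupport hμ.2.1).tsum_sub (summable_of_hasFiniteSupport hν.2.1),
      hμ.2.2, hν.2.2, sub_self]
  linarith [(summable_excess hμ hν.1).tsum_sub (summable_excess hν hμ.1)]

theorem tsum_excess_le_one {μ ν : V → ℝ} (hμ : IsProb μ) (hν : IsProb ν) :
    ∑' v, excess μ ν v ≤ 1 := by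
  have hμs : Summable μ := summable_of_hasFiniteSupport hμ.2.1
  rw [← hμ.2.2]
  exact Summable.tsum_le_tsum (fun v => max_le (by linarith [hν.1 v]) (hμ.1 v))
    (summable_excess hμ hν.1) hμs

-- The maximal (total variation) coupling: the common mass stays put, the excess of `μ` is
-- spread over the excess of `ν` proportionally.
noncomputable def excessCoupling (μ ν : V → ℝ) (u v : V) : ℝ :=
  (if v = u then min (μ u) (ν u) else 0) + excess μ ν u * excess ν μ v / ∑' w, excess μ ν w

theorem excessCoupling_comm {μ ν : V → ℝ} (hμ : IsProb μ) (hν : IsProb ν) (u v : V) :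
    excessCoupling ν μ v u = excessCoupling μ ν u v := by
  have hdiag : (if u = v then min (ν v) (μ v) else 0) = if v = u then min (μ u) (ν u) else 0 := by
    by_cases h : u = v
    · subst h
      simp [min_comm]
    · simp [h, Ne.symm h]
  simp only [excessCoupling, hdiag, tsum_excess_comm hν hμ, mul_comm (excess ν μ v)]

theorem tsum_excessCoupling_right {μ ν : V → ℝ} (hμ : IsProb μ) (hν : IsProb ν) (u : V) :
    ∑' v, excessCoupling μ ν u v = μ u := by
  have hdiv : excess μ ν u * (∑' w, excess μ ν w) / ∑' w, excess μ ν w = excess μ ν u := by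
    rcases (tsum_nonneg (excess_nonneg μ ν)).eq_or_lt with h | h
    · have hle := (summable_excess hμ hν.1).le_tsum u fun w _ => excess_nonneg μ ν w
      simp [le_antisymm (hle.trans h.ge) (excess_nonneg μ ν u)]
    · field_simp
  have hsum : ∑' v, excess μ ν u * excess ν μ v / ∑' w, excess μ ν w = excess μ ν u := by
    rw [tsum_div_const, tsum_mul_left, tsum_excess_comm hμ hν, hdiv]
  simp only [excessCoupling]
  rw [Summable.tsum_add (hasSum_ite_eq u _).summable
      (((summable_excess hν hμ.1).mul_left _).div_const _), tsum_ite_eq, hsum, min_add_excess]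

theorem isCoupling_excessCoupling {μ ν : V → ℝ} (hμ : IsProb μ) (hν : IsProb ν) :
    IsCoupling (excessCoupling μ ν) μ ν := by
  refine ⟨fun u v => add_nonneg ?_ ?_, tsum_excessCoupling_right hμ hν, fun v => ?_⟩
  · split_ifs
    exacts [le_min (hμ.1 u) (hν.1 u), le_rfl]
  · exact div_nonneg (mul_nonneg (excess_nonneg μ ν u) (excess_nonneg ν μ v))
      (tsum_nonneg (excess_nonneg μ ν))
  · simp_rw [← excessCoupling_comm hμ hν]
    exact tsum_excessCoupling_right hν hμ v

-- Only the excess of `μ` moves, and it moves inside the hyperedge `e`, i.e. by distance `≤ 1`.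
theorem W1_le_tsum_excess {μ ν : V → ℝ} (hμ : IsProb μ) (hν : IsProb ν) {e : Set V}
    (he : e ∈ H.E) (hsupp : Function.support (fun v => ν v - μ v) ⊆ e) :
    W1 H μ ν ≤ ∑' v, excess μ ν v := by
  set M := ∑' w, excess μ ν w
  have hprod : Summable fun p : V × V => excess μ ν p.1 * excess ν μ p.2 :=
    (summable_excess hμ hν.1).mul_of_nonneg (summable_excess hν hμ.1)
      (excess_nonneg μ ν) (excess_nonneg ν μ)
  have hmem : ∀ w, μ w ≠ ν w → w ∈ e := fun w hw => hsupp (sub_ne_zero.mpr hw.symm)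
  have hcost : ∀ p : V × V, (H.dist p.1 p.2 : ℝ) * excessCoupling μ ν p.1 p.2
      ≤ excess μ ν p.1 * excess ν μ p.2 / M := by
    rintro ⟨u, v⟩
    have hg0 : 0 ≤ excess μ ν u * excess ν μ v / M :=
      div_nonneg (mul_nonneg (excess_nonneg μ ν u) (excess_nonneg ν μ v))
        (tsum_nonneg (excess_nonneg μ ν))
    by_cases huv : v = u
    · subst huv
      simp [H.dist_self, hg0]
    simp only [excessCoupling, if_neg huv, zero_add]
    rcases eq_or_ne (excess μ ν u * excess ν μ v) 0 with h0 | h0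
    · simp [h0]
    have hu : u ∈ e := hmem u fun h => left_ne_zero_of_mul h0 (by simp [excess, h])
    have hv : v ∈ e := hmem v fun h => right_ne_zero_of_mul h0 (by simp [excess, h])
    calc (H.dist u v : ℝ) * (excess μ ν u * excess ν μ v / M)
        ≤ 1 * (excess μ ν u * excess ν μ v / M) :=
          mul_le_mul_of_nonneg_right (by exact_mod_cast H.dist_le_one he hu hv) hg0
      _ = _ := one_mul _
  calc W1 H μ ν ≤ ∑' p : V × V, (H.dist p.1 p.2 : ℝ) * excessCoupling μ ν p.1 p.2 :=
        W1_le_of_isCoupling H (isCoupling_excessCoupling hμ hν)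
    _ ≤ ∑' p : V × V, excess μ ν p.1 * excess ν μ p.2 / M :=
      Summable.tsum_le_tsum hcost ((hprod.div_const M).of_nonneg_of_le (fun p =>
        mul_nonneg (Nat.cast_nonneg _) ((isCoupling_excessCoupling hμ hν).1 _ _)) hcost)
        (hprod.div_const M)
    _ = M := by
      rw [tsum_div_const, ← (summable_excess hμ hν.1).tsum_mul_tsum (summable_excess hν hμ.1)
        hprod, tsum_excess_comm hμ hν, mul_self_div_self]

theorem W1_le_one {μ ν : V → ℝ} (hμ : IsProb μ) (hν : IsProb ν) {e : Set V} (he : e ∈ H.E)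
    (hsupp : Function.support (fun v => ν v - μ v) ⊆ e) : W1 H μ ν ≤ 1 :=
  (W1_le_tsum_excess H hμ hν he hsupp).trans (tsum_excess_le_one hμ hν)

end Wasserstein

theorem CostFn.le_mul {h : ℝ → ℝ} {D0 D1 : ℝ} (hc : CostFn h D0 D1) {t : ℝ}
    (ht : t ∈ Set.Icc (0 : ℝ) 1) : h t ≤ D0 * t := by
  rcases ht.1.eq_or_lt with rfl | ht0
  · simp [hc.zero]
  have hslope : ∀ s ∈ Set.Ioc (0 : ℝ) t, h t / t ≤ h s / s := fun s hs => by
    have := hc.concave.neg.secant_mono (a := 0) ⟨le_rfl, zero_le_one⟩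
      ⟨hs.1.le, hs.2.trans ht.2⟩ ht hs.1.ne' ht0.ne' hs.2
    simpa [hc.zero, neg_div] using this
  have hlim : h t / t ≤ D0 := ge_of_tendsto hc.d0 <| by
    filter_upwards [Ioc_mem_nhdsGT ht0] with s hs using hslope s hs
  exact (div_le_iff₀ ht0).mp hlim

def WhCosts {V : Type*} (H : HGraph V) (h : ℝ → ℝ) (μ ν : V → ℝ) : Set ℝ :=
  {c | ∃ I ξ, WhAdmissible H μ ν I ξ ∧ c = ∑ i ∈ Finset.range I, h (W1 H (ξ i) (ξ (i + 1)))}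

section WhCosts

variable {V : Type*} {H : HGraph V} {h : ℝ → ℝ} {μ ν ρ : V → ℝ}

theorem nonneg_of_mem_WhCosts {D0 D1 : ℝ} (hc : CostFn h D0 D1) {c : ℝ}
    (hmem : c ∈ WhCosts H h μ ν) : 0 ≤ c := by
  obtain ⟨I, ξ, ⟨-, -, hprob, hstep⟩, rfl⟩ := hmem
  refine Finset.sum_nonneg fun i hi => ?_
  have hi : i < I := Finset.mem_range.mp hi
  obtain ⟨e, he, hsupp⟩ := hstep i hi
  exact hc.nonneg _ ⟨W1_nonneg H _ _, W1_le_one H (hprob i hi.le) (hprob (i + 1) hi) he hsupp⟩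

theorem Wh_nonneg {D0 D1 : ℝ} (hc : CostFn h D0 D1) : 0 ≤ Wh H h μ ν :=
  Real.sInf_nonneg fun _ => nonneg_of_mem_WhCosts hc

theorem Wh_le_of_mem_WhCosts {D0 D1 : ℝ} (hc : CostFn h D0 D1) {c : ℝ} (hmem : c ∈ WhCosts H h μ ν) :
    Wh H h μ ν ≤ c :=
  csInf_le ⟨0, fun _ => nonneg_of_mem_WhCosts hc⟩ hmem

theorem zero_mem_WhCosts (hμ : IsProb μ) : (0 : ℝ) ∈ WhCosts H h μ μ :=
  ⟨0, fun _ => μ, ⟨rfl, rfl, fun _ _ => hμ, fun i hi => absurd hi (Nat.not_lt_zero i)⟩, by simp⟩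

theorem h_W1_mem_WhCosts (hμ : IsProb μ) (hν : IsProb ν) {e : Set V} (he : e ∈ H.E)
    (hsupp : Function.support (fun v => ν v - μ v) ⊆ e) : h (W1 H μ ν) ∈ WhCosts H h μ ν := by
  refine ⟨1, fun i => if i = 0 then μ else ν, ⟨rfl, rfl, fun i _ => ?_, fun i hi => ?_⟩, by simp⟩
  · show IsProb (if i = 0 then μ else ν)
    split_ifs
    exacts [hμ, hν]
  · obtain rfl : i = 0 := Nat.lt_one_iff.mp hi
    exact ⟨e, he, hsupp⟩

theorem add_mem_WhCosts {a b : ℝ} (ha : a ∈ WhCosts H h μ ν) (hb : b ∈ WhCosts H h ν ρ) :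
    a + b ∈ WhCosts H h μ ρ := by
  obtain ⟨I, ξ, ⟨hξ0, hξI, hξp, hξs⟩, rfl⟩ := ha
  obtain ⟨J, η, ⟨hη0, hηJ, hηp, hηs⟩, rfl⟩ := hb
  set ζ : ℕ → V → ℝ := fun i => if i ≤ I then ξ i else η (i - I) with hζ
  have hleft : ∀ i ≤ I, ζ i = ξ i := fun i hi => if_pos hi
  have hright : ∀ k, ζ (I + k) = η k := fun k => by
    rcases k.eq_zero_or_pos with rfl | hk
    · simp [hζ, hξI, hη0]
    · simp [hζ, hk.ne']
  have hsplit : ∀ i, i < I ∨ ∃ k, i = I + k := fun i =>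
    (lt_or_ge i I).imp_right fun hi => ⟨i - I, by omega⟩
  refine ⟨I + J, ζ, ⟨by simp [hleft, hξ0], by rw [hright, hηJ], fun i hi => ?_, fun i hi => ?_⟩, ?_⟩
  · rcases hsplit i with hi' | ⟨k, rfl⟩
    · rw [hleft i hi'.le]; exact hξp i hi'.le
    · rw [hright]; exact hηp k (by omega)
  · rcases hsplit i with hi' | ⟨k, rfl⟩
    · rw [hleft i hi'.le, hleft (i + 1) hi']; exact hξs i hi'
    · rw [hright, add_assoc, hright]; exact hηs k (by omega)
  · rw [Finset.sum_range_add]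
    congr 1
    · refine Finset.sum_congr rfl fun i hi => ?_
      have hi : i < I := Finset.mem_range.mp hi
      rw [hleft i hi.le, hleft (i + 1) hi]
    · simp only [add_assoc, hright]

theorem mem_WhCosts_comm {c : ℝ} (hmem : c ∈ WhCosts H h μ ν) : c ∈ WhCosts H h ν μ := by
  obtain ⟨I, ξ, ⟨hξ0, hξI, hξp, hξs⟩, rfl⟩ := hmem
  refine ⟨I, fun i => ξ (I - i), ⟨by simp [hξI], by simp [hξ0], fun i _ => hξp _ (by omega),
    fun i hi => ?_⟩, ?_⟩
  · obtain ⟨e, he, hsupp⟩ := hξs (I - (i + 1)) (by omega)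
    refine ⟨e, he, fun v hv => hsupp ?_⟩
    rw [show I - (i + 1) + 1 = I - i by omega]
    simpa [Function.mem_support, sub_eq_zero, eq_comm] using hv
  · rw [← Finset.sum_range_reflect]
    refine Finset.sum_congr rfl fun i hi => ?_
    have hi : i < I := Finset.mem_range.mp hi
    show _ = h (W1 H (ξ (I - i)) (ξ (I - (i + 1))))
    rw [W1_comm, show I - 1 - i + 1 = I - i by omega, show I - 1 - i = I - (i + 1) by omega]

theorem WhCosts_dirac_nonempty (hconn : H.Connected) (x y : V) :
    (WhCosts H h (dirac x) (dirac y)).Nonempty := by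
  obtain ⟨n, f, h0, hn, hstep⟩ := hconn x y
  refine ⟨_, n, fun i => dirac (f i),
    ⟨congrArg dirac h0, congrArg dirac hn, fun i _ => isProb_dirac _, fun i hi => ?_⟩, rfl⟩
  obtain ⟨e, he, hi, hi1⟩ := hstep i hi
  refine ⟨e, he, fun v hv => ?_⟩
  by_cases hv1 : v = f (i + 1)
  · exact hv1 ▸ hi1
  by_cases hv0 : v = f i
  · exact hv0 ▸ hi
  exact absurd (by simp [dirac, hv0, hv1]) hv

theorem Wh_le_add_Wh_add {D0 D1 : ℝ} (hc : CostFn h D0 D1) {μ' ν' : V → ℝ} {a b : ℝ}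
    (ha : a ∈ WhCosts H h μ' μ) (hb : b ∈ WhCosts H h ν ν') (hne : (WhCosts H h μ ν).Nonempty) :
    Wh H h μ' ν' ≤ a + Wh H h μ ν + b := by
  have : Wh H h μ' ν' - a - b ≤ Wh H h μ ν := le_csInf hne fun c hcmem => by
    linarith [Wh_le_of_mem_WhCosts hc (add_mem_WhCosts (add_mem_WhCosts ha hcmem) hb)]
  linarith

end WhCosts

noncomputable def spread {V : Type*} (x : V) (s : Finset V) (m : ℝ) : V → ℝ :=
  fun v => if v = x then 1 - s.card * m else if v ∈ s then m else 0

section spread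

variable {V : Type*} {x a : V} {s : Finset V} {m : ℝ}

theorem isProb_spread (hm : 0 ≤ m) (hcard : s.card * m ≤ 1) (hxs : x ∉ s) :
    IsProb (spread x s m) := by
  refine ⟨fun v => ?_, (s.finite_toSet.insert x).subset fun v hv => ?_, ?_⟩
  · unfold spread
    split_ifs <;> linarith
  · by_contra hvs
    simp only [Set.mem_insert_iff, Finset.mem_coe, not_or] at hvs
    exact hv (by simp [spread, hvs.1, hvs.2])
  · rw [tsum_eq_sum (s := insert x s) fun v hv => by
      simp only [Finset.mem_insert, not_or] at hv
      simp [spread, hv.1, hv.2]]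
    rw [Finset.sum_insert hxs, Finset.sum_congr rfl fun v hv =>
      show spread x s m v = m by simp [spread, hv, ne_of_mem_of_not_mem hv hxs]]
    simp [spread]

theorem spread_insert_sub_spread (hax : a ≠ x) (ha : a ∉ s) (v : V) :
    spread x (insert a s) m v - spread x s m v
      = (if v = a then m else 0) - (if v = x then m else 0) := by
  by_cases hvx : v = x
  · subst hvx
    simp [spread, Ne.symm hax, Finset.card_insert_of_notMem ha]
    ring
  by_cases hva : v = a
  · subst hva
    simp [spread, hax, ha]
  · simp [spread, hvx, hva]

variable {H : HGraph V} {h : ℝ → ℝ} {D0 D1 : ℝ}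

theorem exists_mem_WhCosts_spread_insert_le (hc : CostFn h D0 D1) (hxa : H.Adj x a)
    (ha : a ∉ s) (hxs : x ∉ s) (hm : 0 ≤ m) (hcard : (insert a s).card * m ≤ 1) :
    ∃ c ∈ WhCosts H h (spread x s m) (spread x (insert a s) m), c ≤ D0 * m := by
  obtain ⟨hax, e, he, hxe, hae⟩ := hxa
  have hcard_s : s.card * m ≤ 1 := by
    rw [Finset.card_insert_of_notMem ha] at hcard
    push_cast at hcard
    linarith
  have hμ := isProb_spread hm hcard_s hxs
  have hν : IsProb (spread x (insert a s) m) := isProb_spread hm hcard (by simp [hax, hxs])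
  have hsupp : Function.support (fun v => spread x (insert a s) m v - spread x s m v) ⊆ e := by
    intro v hv
    rw [Function.mem_support, spread_insert_sub_spread (Ne.symm hax) ha] at hv
    by_cases hvx : v = x
    · exact hvx ▸ hxe
    by_cases hva : v = a
    · exact hva ▸ hae
    simp [hvx, hva] at hv
  have hexcess : ∑' v, excess (spread x s m) (spread x (insert a s) m) v = m := by
    have hmax : ∀ v, excess (spread x s m) (spread x (insert a s) m) v
        = if v = x then m else 0 := fun v => by
      rw [excess, ← neg_sub, spread_insert_sub_spread (Ne.symm hax) ha]
      by_cases hvx : v = x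
      · simp [hvx, hax, hm]
      · split_ifs <;> simp [hm]
    simp [hmax]
  have hW1 : W1 H (spread x s m) (spread x (insert a s) m) ≤ m :=
    (W1_le_tsum_excess H hμ hν he hsupp).trans hexcess.le
  refine ⟨_, h_W1_mem_WhCosts hμ hν he hsupp, ?_⟩
  calc h (W1 H (spread x s m) (spread x (insert a s) m))
      ≤ D0 * W1 H (spread x s m) (spread x (insert a s) m) :=
        hc.le_mul ⟨W1_nonneg H _ _, W1_le_one H hμ hν he hsupp⟩
    _ ≤ D0 * m := mul_le_mul_of_nonneg_left hW1 hc.d0_pos.le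

theorem exists_mem_WhCosts_dirac_spread_le (hc : CostFn h D0 D1) (hm : 0 ≤ m) :
    (∀ v ∈ s, H.Adj x v) → s.card * m ≤ 1 →
    ∃ c ∈ WhCosts H h (dirac x) (spread x s m), c ≤ D0 * (s.card * m) := by
  induction s using Finset.induction_on with
  | empty =>
    intro _ _
    have hdirac : spread x ∅ m = dirac x := funext fun v => by
      by_cases hv : v = x <;> simp [spread, dirac, hv]
    rw [hdirac]
    exact ⟨0, zero_mem_WhCosts (isProb_dirac x), by simp⟩
  | @insert a s ha ih =>
    intro hadj hcard
    have hcard' : ((insert a s).card : ℝ) = s.card + 1 := by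
      rw [Finset.card_insert_of_notMem ha]
      push_cast
      ring
    obtain ⟨c, hc_mem, hc_le⟩ := ih (fun v hv => hadj v (Finset.mem_insert_of_mem hv))
      (by nlinarith)
    obtain ⟨d, hd_mem, hd_le⟩ := exists_mem_WhCosts_spread_insert_le hc
      (hadj a (Finset.mem_insert_self a s)) ha
      (fun hxs => (hadj x (Finset.mem_insert_of_mem hxs)).1 rfl) hm hcard
    exact ⟨c + d, add_mem_WhCosts hc_mem hd_mem, by rw [hcard']; linarith⟩

end spread

section lazyWalk

variable {V : Type*} {H : HGraph V}

theorem rw_eq_spread (hlf : H.LocallyFinite) (α : ℝ) {x : V} (hd : 0 < H.degree x) :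
    rw H α x = spread x (hlf x).toFinset ((1 - α) / H.degree x) := by
  have hcard : (hlf x).toFinset.card = H.degree x := (Set.ncard_eq_toFinset_card _ (hlf x)).symm
  have hd' : (H.degree x : ℝ) ≠ 0 := by exact_mod_cast hd.ne'
  funext v
  by_cases hvx : v = x
  · simp only [rw, spread, if_pos hvx, hcard]
    field_simp
    ring
  · simp [rw, spread, hvx]

theorem exists_mem_WhCosts_dirac_rw_le {h : ℝ → ℝ} {D0 D1 : ℝ} (hc : CostFn h D0 D1)
    (hlf : H.LocallyFinite) {x : V} (hd : 0 < H.degree x) {α : ℝ} (hα : α ∈ Set.Icc (0 : ℝ) 1) :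
    ∃ c ∈ WhCosts H h (dirac x) (rw H α x), c ≤ D0 * (1 - α) := by
  have hcard : ((hlf x).toFinset.card : ℝ) * ((1 - α) / H.degree x) = 1 - α := by
    rw [← Set.ncard_eq_toFinset_card _ (hlf x)]
    exact mul_div_cancel₀ _ (by exact_mod_cast hd.ne')
  have hm : 0 ≤ (1 - α) / H.degree x := div_nonneg (by linarith [hα.2]) (Nat.cast_nonneg _)
  obtain ⟨c, hmem, hle⟩ := exists_mem_WhCosts_dirac_spread_le hc hm
    (fun v hv => (hlf x).mem_toFinset.mp hv) (by linarith [hα.1])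
  rw [rw_eq_spread hlf α hd]
  exact ⟨c, hmem, hcard ▸ hle⟩

end lazyWalk

theorem neg_div_le_one_sub_div {A W c : ℝ} (hW : 0 ≤ W) (hA : A ≤ W + c) :
    -c / W ≤ 1 - A / W := by
  rcases hW.eq_or_lt with rfl | hW
  · simp
  · rw [one_sub_div hW.ne', div_le_div_iff_of_pos_right hW]
    linarith

theorem ORic_lower_bound_general {V : Type*} (H : HGraph V)
    (hconn : H.Connected) (hlf : H.LocallyFinite)
    (h : ℝ → ℝ) (D0 D1 : ℝ) (hc : CostFn h D0 D1)
    (α : ℝ) (hα : α ∈ Set.Icc (0 : ℝ) 1) (x y : V) (hxy : x ≠ y) :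
    -(2 * D0 * (1 - α)) / Wh H h (dirac x) (dirac y) ≤ ORic H h α x y := by
  obtain ⟨cx, hcx, hcx_le⟩ := exists_mem_WhCosts_dirac_rw_le hc hlf (H.degree_pos hconn hlf hxy) hα
  obtain ⟨cy, hcy, hcy_le⟩ :=
    exists_mem_WhCosts_dirac_rw_le hc hlf (H.degree_pos hconn hlf hxy.symm) hα
  have htriangle :=
    Wh_le_add_Wh_add hc (mem_WhCosts_comm hcx) hcy (WhCosts_dirac_nonempty hconn x y)
  exact neg_div_le_one_sub_div (Wh_nonneg hc) (by linarith)

/-- Lower bound on the `(α,h)`-Ollivier–Ricci curvature. -/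
theorem ORic_lower_bound {V : Type*} (H : HGraph V)
    (hconn : H.Connected) (hlf : H.LocallyFinite) (hsimp : H.Simple)
    (h : ℝ → ℝ) (D0 D1 : ℝ) (hc : CostFn h D0 D1)
    (α : ℝ) (hα : α ∈ Set.Icc (0 : ℝ) 1) (x y : V) (hxy : x ≠ y) :
    -(2 * D0 * (1 - α)) / Wh H h (dirac x) (dirac y) ≤ ORic H h α x y :=
  ORic_lower_bound_general H hconn hlf h D0 D1 hc α hα x y hxy
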